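/- arXiv:math/9902064 — 9 statements merged into one kernel-verified Lean document; each statement's English description precedes it below -/
import Mathlib

section
/- Let n ≥ 3, and let M be an (n-1)×(n-1) matrix with nonnegative real entries satisfying M = S·M·S (where S_{ab} = √(2/n)·sin(πab/n)) and M_{11} = 1. Then for all a,b ∈ {1,...,n-1}, M_{ab} ≤ 1/(S_{11})² = n/(2·sin²(π/n)). -/
open Real Finset

theorem stmt_3 (n : ℕ) (hn : 3 ≤ n) (S M : ℕ → ℕ → ℝ)
    (hS : ∀ a b, S a b = Real.sqrt (2 / n) * Real.sin (π * a * b / n))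
    (hpos : ∀ a ∈ Finset.Icc 1 (n - 1), ∀ b ∈ Finset.Icc 1 (n - 1), 0 ≤ M a b)
    (hM11 : M 1 1 = 1)
    (hSMS : ∀ a ∈ Finset.Icc 1 (n - 1), ∀ b ∈ Finset.Icc 1 (n - 1),
      M a b = ∑ c ∈ Finset.Icc 1 (n - 1), ∑ d ∈ Finset.Icc 1 (n - 1),
        S a c * M c d * S d b) :
    (∀ a ∈ Finset.Icc 1 (n - 1), ∀ b ∈ Finset.Icc 1 (n - 1),
      M a b ≤ 1 / (S 1 1) ^ 2) ∧
    1 / (S 1 1) ^ 2 = n / (2 * Real.sin (π / n) ^ 2) := by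
  have hn0 : (0:ℝ) < n := by
    have : (3:ℝ) ≤ n := by exact_mod_cast hn
    linarith
  have hs : 0 < Real.sqrt (2 / n) := Real.sqrt_pos.mpr (by positivity)
  -- bounds on arguments
  have hbound : ∀ a ∈ Finset.Icc 1 (n - 1), π / n ≤ π * a / n ∧ π * a / n ≤ π - π / n := by
    intro a ha
    rw [Finset.mem_Icc] at ha
    have h1 : (1:ℝ) ≤ a := by exact_mod_cast ha.1
    have h2 : (a:ℝ) + 1 ≤ n := by
      have : a + 1 ≤ n := by omega
      exact_mod_cast this
    constructor
    · rw [div_le_div_iff₀ hn0 hn0]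
      nlinarith [mul_nonneg (mul_nonneg Real.pi_pos.le hn0.le) (sub_nonneg.mpr h1)]
    · have key : π * a / n + π / n ≤ π := by
        rw [← add_div, div_le_iff₀ hn0]
        nlinarith [mul_le_mul_of_nonneg_left h2 Real.pi_pos.le]
      linarith
  have hsinpos : ∀ a ∈ Finset.Icc 1 (n - 1), 0 < Real.sin (π * a / n) := by
    intro a ha
    obtain ⟨h1, h2⟩ := hbound a ha
    have hπn : 0 < π / n := by positivity
    apply Real.sin_pos_of_pos_of_lt_pi <;> nlinarith
  have hπn2 : π / n ≤ π / 2 := by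
    have hn3 : (3:ℝ) ≤ n := by exact_mod_cast hn
    rw [div_le_div_iff₀ hn0 (by norm_num)]
    nlinarith [mul_nonneg Real.pi_pos.le (by linarith : (0:ℝ) ≤ (n:ℝ) - 2)]
  have hπn0 : 0 < π / n := by positivity
  have hsinmin : ∀ a ∈ Finset.Icc 1 (n - 1), Real.sin (π / n) ≤ Real.sin (π * a / n) := by
    intro a ha
    obtain ⟨h1, h2⟩ := hbound a ha
    rcases le_total (π * a / n) (π / 2) with h | h
    · exact Real.strictMonoOn_sin.monotoneOn ⟨by linarith, by linarith⟩
        ⟨by linarith, by linarith⟩ h1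
    · rw [← Real.sin_pi_sub (π * a / n)]
      exact Real.strictMonoOn_sin.monotoneOn ⟨by linarith, by linarith⟩
        ⟨by linarith, by linarith⟩ (by linarith)
  have hS1 : ∀ a, S 1 a = Real.sqrt (2 / n) * Real.sin (π * a / n) := by
    intro a; rw [hS]; push_cast; ring_nf
  have hSr1 : ∀ a, S a 1 = Real.sqrt (2 / n) * Real.sin (π * a / n) := by
    intro a; rw [hS]; push_cast; ring_nf
  have hSpos : ∀ a ∈ Finset.Icc 1 (n - 1), 0 < S 1 a := by
    intro a ha; rw [hS1]; exact mul_pos hs (hsinpos a ha)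
  have h1mem : 1 ∈ Finset.Icc 1 (n - 1) := by
    rw [Finset.mem_Icc]; omega
  have hterm : ∀ a ∈ Finset.Icc 1 (n - 1), ∀ b ∈ Finset.Icc 1 (n - 1),
      S 1 a * M a b * S b 1 ≤ 1 := by
    intro a ha b hb
    have h1 := hSMS 1 h1mem 1 h1mem
    rw [hM11] at h1
    have hnn : ∀ c ∈ Finset.Icc 1 (n - 1), ∀ d ∈ Finset.Icc 1 (n - 1),
        0 ≤ S 1 c * M c d * S d 1 := by
      intro c hc d hd
      have := hSpos c hc
      have hd1 : 0 < S d 1 := by rw [hSr1]; exact mul_pos hs (hsinpos d hd)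
      have := hpos c hc d hd
      positivity
    calc S 1 a * M a b * S b 1
        ≤ ∑ d ∈ Finset.Icc 1 (n - 1), S 1 a * M a d * S d 1 :=
          Finset.single_le_sum (fun d hd => hnn a ha d hd) hb
      _ ≤ ∑ c ∈ Finset.Icc 1 (n - 1), ∑ d ∈ Finset.Icc 1 (n - 1),
            S 1 c * M c d * S d 1 :=
          Finset.single_le_sum (fun c hc => Finset.sum_nonneg (fun d hd => hnn c hc d hd)) ha
      _ = 1 := h1.symm
  have hS11 : 0 < S 1 1 := hSpos 1 h1mem
  constructor
  · intro a ha b hb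
    have hta := hterm a ha b hb
    have h1a : S 1 1 ≤ S 1 a := by
      rw [hS1, hS1]
      have := hsinmin a ha
      have h1 : π * (1:ℕ) / n = π / n := by push_cast; ring
      rw [h1]
      nlinarith
    have h1b : S 1 1 ≤ S b 1 := by
      rw [hS1, hSr1]
      have := hsinmin b hb
      have h1 : π * (1:ℕ) / n = π / n := by push_cast; ring
      rw [h1]
      nlinarith
    have hMab := hpos a ha b hb
    rw [le_div_iff₀ (by positivity)]
    nlinarith [mul_le_mul_of_nonneg_left
      (mul_le_mul h1a h1b hS11.le (le_of_lt (hSpos a ha))) hMab]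
  · have e : S 1 1 ^ 2 = 2 / n * Real.sin (π / n) ^ 2 := by
      rw [hS1]
      have h1 : π * (1:ℕ) / n = π / n := by push_cast; ring
      rw [h1, mul_pow, Real.sq_sqrt (by positivity)]
    rw [e]
    have hsin : Real.sin (π / n) ≠ 0 := by
      have : 0 < Real.sin (π / n) := Real.sin_pos_of_pos_of_lt_pi hπn0 (by nlinarith [Real.pi_pos])
      linarith
    field_simp
end

section
/- Let n ≥ 3, J a = n - a, and let M be a nonnegative real (n-1)×(n-1) matrix with M = S·M·S and M_{11} = 1. Then for any i,j ∈ {0,1}, M_{J^i 1, J^j 1} ≤ 1. -/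
open Real Finset

lemma sin_abs_key (n a c : ℕ) (hn : 3 ≤ n) (ha : a = 1 ∨ a = n - 1)
    (hc1 : 1 ≤ c) (hc2 : c ≤ n - 1) :
    |Real.sin (π * a * c / n)| = Real.sin (π * c / n) := by
  have hn0 : (0:ℝ) < n := by positivity
  have hcn : (c:ℝ) ≤ n := by
    have : c ≤ n := le_trans hc2 (Nat.sub_le n 1)
    exact_mod_cast this
  have hx0 : 0 ≤ π * c / n := by positivity
  have hxpi : π * c / n ≤ π := by
    rw [div_le_iff₀ hn0]
    have := Real.pi_pos
    nlinarith
  have hsin : 0 ≤ Real.sin (π * c / n) :=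
    Real.sin_nonneg_of_nonneg_of_le_pi hx0 hxpi
  rcases ha with rfl | rfl
  · rw [show π * (1:ℕ) * c / n = π * c / n by push_cast; ring]
    exact abs_of_nonneg hsin
  · have hcast : ((n - 1 : ℕ) : ℝ) = (n : ℝ) - 1 := by
      have : 1 ≤ n := by omega
      push_cast [Nat.cast_sub this]; ring
    have heq : π * ((n - 1 : ℕ) : ℝ) * c / n = (c : ℝ) * π - π * c / n := by
      rw [hcast]; field_simp
    rw [heq, Real.sin_nat_mul_pi_sub, abs_neg, abs_mul, abs_pow, abs_neg,
      abs_one, one_pow, one_mul, abs_of_nonneg hsin]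

theorem stmt_4 (n : ℕ) (hn : 3 ≤ n) (S M : ℕ → ℕ → ℝ)
    (hS : ∀ a b, S a b = Real.sqrt (2 / n) * Real.sin (π * a * b / n))
    (hpos : ∀ a ∈ Finset.Icc 1 (n - 1), ∀ b ∈ Finset.Icc 1 (n - 1), 0 ≤ M a b)
    (hM11 : M 1 1 = 1)
    (hSMS : ∀ a ∈ Finset.Icc 1 (n - 1), ∀ b ∈ Finset.Icc 1 (n - 1),
      M a b = ∑ c ∈ Finset.Icc 1 (n - 1), ∑ d ∈ Finset.Icc 1 (n - 1),
        S a c * M c d * S d b) :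
    M 1 1 ≤ 1 ∧ M 1 (n - 1) ≤ 1 ∧ M (n - 1) 1 ≤ 1 ∧ M (n - 1) (n - 1) ≤ 1 := by
  have h1mem : 1 ∈ Finset.Icc 1 (n - 1) := by simp [Finset.mem_Icc]; omega
  have hn1mem : n - 1 ∈ Finset.Icc 1 (n - 1) := by simp [Finset.mem_Icc]; omega
  have key : ∀ a ∈ Finset.Icc 1 (n - 1), ∀ b ∈ Finset.Icc 1 (n - 1),
      (a = 1 ∨ a = n - 1) → (b = 1 ∨ b = n - 1) → M a b ≤ 1 := by
    intro a hamem b hbmem ha hb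
    rw [hSMS a hamem b hbmem]
    have h11 : M 1 1 = ∑ c ∈ Finset.Icc 1 (n - 1), ∑ d ∈ Finset.Icc 1 (n - 1),
        S 1 c * M c d * S d 1 := hSMS 1 h1mem 1 h1mem
    rw [← hM11]
    rw [h11]
    apply Finset.sum_le_sum
    intro c hc
    apply Finset.sum_le_sum
    intro d hd
    simp only [Finset.mem_Icc] at hc hd
    have hM : 0 ≤ M c d := hpos c (by simp [Finset.mem_Icc]; omega)
      d (by simp [Finset.mem_Icc]; omega)
    have hr : 0 ≤ Real.sqrt (2 / n) := Real.sqrt_nonneg _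
    have habs1 : |S a c| = S 1 c := by
      rw [hS, hS, abs_mul, abs_of_nonneg hr,
        sin_abs_key n a c hn ha hc.1 hc.2]
      push_cast; ring_nf
    have habs2 : |S d b| = S d 1 := by
      rw [hS, hS, abs_mul, abs_of_nonneg hr]
      have : π * (d:ℝ) * b / n = π * (b:ℝ) * d / n := by ring
      rw [this, sin_abs_key n b d hn hb hd.1 hd.2]
      push_cast; ring_nf
    calc S a c * M c d * S d b ≤ |S a c * M c d * S d b| := le_abs_self _
      _ = |S a c| * M c d * |S d b| := by
          rw [abs_mul, abs_mul, abs_of_nonneg hM]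
      _ = S 1 c * M c d * S d 1 := by rw [habs1, habs2]
  exact ⟨le_of_eq hM11, key 1 h1mem (n-1) hn1mem (Or.inl rfl) (Or.inr rfl),
    key (n-1) hn1mem 1 h1mem (Or.inr rfl) (Or.inl rfl),
    key (n-1) hn1mem (n-1) hn1mem (Or.inr rfl) (Or.inr rfl)⟩
end

section
/- Let n ≥ 3, Ja = n - a, and let M be a nonnegative real (n-1)×(n-1) matrix with M = S·M·S and M_{11} = 1. If M_{J1,J1} = 1, then for all a,b ∈ {1,...,n-1} with M_{ab} ≠ 0, a ≡ b (mod 2); moreover M_{Ja,Jb} = M_{ab} for all a,b. -/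
open Real Finset

theorem stmt_5 (n : ℕ) (hn : 3 ≤ n) (S M : ℕ → ℕ → ℝ)
    (hS : ∀ a b, S a b = Real.sqrt (2 / n) * Real.sin (π * a * b / n))
    (hpos : ∀ a ∈ Finset.Icc 1 (n - 1), ∀ b ∈ Finset.Icc 1 (n - 1), 0 ≤ M a b)
    (hM11 : M 1 1 = 1)
    (hSMS : ∀ a ∈ Finset.Icc 1 (n - 1), ∀ b ∈ Finset.Icc 1 (n - 1),
      M a b = ∑ c ∈ Finset.Icc 1 (n - 1), ∑ d ∈ Finset.Icc 1 (n - 1),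
        S a c * M c d * S d b)
    (hJJ : M (n - 1) (n - 1) = 1) :
    (∀ a ∈ Finset.Icc 1 (n - 1), ∀ b ∈ Finset.Icc 1 (n - 1),
      M a b ≠ 0 → a % 2 = b % 2) ∧
    (∀ a ∈ Finset.Icc 1 (n - 1), ∀ b ∈ Finset.Icc 1 (n - 1),
      M (n - a) (n - b) = M a b) := by
  have hn0 : (0:ℝ) < n := by positivity
  have hnne : (n:ℝ) ≠ 0 := ne_of_gt hn0
  -- symmetry of S
  have hSsymm : ∀ a b, S a b = S b a := by
    intro a b; rw [hS, hS]; ring_nf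
  -- reflection rule
  have hJ : ∀ a b : ℕ, a ≤ n → S (n - a) b = (-1)^(b+1) * S a b := by
    intro a b ha
    rw [hS, hS]
    have hc : ((n - a : ℕ) : ℝ) = (n : ℝ) - a := by
      push_cast [Nat.cast_sub ha]; ring
    rw [hc]
    have harg : π * ((n:ℝ) - a) * b / n = (b:ℝ) * π - π * a * b / n := by
      field_simp
    rw [harg, Real.sin_nat_mul_pi_sub]
    rw [pow_succ]
    ring
  -- positivity of S 1 c
  have hSpos : ∀ c ∈ Finset.Icc 1 (n-1), 0 < S 1 c := by
    intro c hc
    simp only [Finset.mem_Icc] at hc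
    rw [hS]
    apply mul_pos
    · apply Real.sqrt_pos.2; positivity
    · apply Real.sin_pos_of_pos_of_lt_pi
      · have : (0:ℝ) < (c:ℝ) := by exact_mod_cast Nat.lt_of_lt_of_le Nat.zero_lt_one hc.1
        positivity
      · rw [div_lt_iff₀ hn0]
        have hcn : (c:ℝ) < n := by
          have : c < n := by omega
          exact_mod_cast this
        have h1 : π * ((1:ℕ):ℝ) * c = π * c := by norm_num
        rw [h1]
        exact mul_lt_mul_of_pos_left hcn Real.pi_pos
  have h1T : (1:ℕ) ∈ Finset.Icc 1 (n-1) := by simp [Finset.mem_Icc]; omega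
  have hJT : (n-1:ℕ) ∈ Finset.Icc 1 (n-1) := by simp [Finset.mem_Icc]; omega
  -- the key vanishing lemma
  have hzero : ∀ c ∈ Finset.Icc 1 (n-1), ∀ d ∈ Finset.Icc 1 (n-1),
      (c + d) % 2 = 1 → M c d = 0 := by
    have e1 : (1:ℝ) = ∑ c ∈ Finset.Icc 1 (n-1), ∑ d ∈ Finset.Icc 1 (n-1),
        S 1 c * M c d * S 1 d := by
      rw [← hM11, hSMS 1 h1T 1 h1T]
      exact Finset.sum_congr rfl fun c _ => Finset.sum_congr rfl fun d _ => by
        rw [hSsymm d 1]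
    have e2 : M (n-1) (n-1) = ∑ c ∈ Finset.Icc 1 (n-1), ∑ d ∈ Finset.Icc 1 (n-1),
        (-1)^(c+d) * (S 1 c * M c d * S 1 d) := by
      rw [hSMS (n-1) hJT (n-1) hJT]
      refine Finset.sum_congr rfl fun c _ => Finset.sum_congr rfl fun d _ => ?_
      rw [hSsymm d (n-1), hJ 1 c (by omega), hJ 1 d (by omega)]
      rw [pow_succ, pow_succ, pow_add]
      ring
    have hsum0 : ∑ c ∈ Finset.Icc 1 (n-1), ∑ d ∈ Finset.Icc 1 (n-1),
        (1 - (-1)^(c+d)) * (S 1 c * M c d * S 1 d) = 0 := by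
      calc ∑ c ∈ Finset.Icc 1 (n-1), ∑ d ∈ Finset.Icc 1 (n-1),
            (1 - (-1)^(c+d)) * (S 1 c * M c d * S 1 d)
          = (∑ c ∈ Finset.Icc 1 (n-1), ∑ d ∈ Finset.Icc 1 (n-1),
              S 1 c * M c d * S 1 d)
            - ∑ c ∈ Finset.Icc 1 (n-1), ∑ d ∈ Finset.Icc 1 (n-1),
              (-1)^(c+d) * (S 1 c * M c d * S 1 d) := by
            rw [← Finset.sum_sub_distrib]
            refine Finset.sum_congr rfl fun c _ => ?_
            rw [← Finset.sum_sub_distrib]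
            exact Finset.sum_congr rfl fun d _ => by ring
        _ = 1 - M (n-1) (n-1) := by rw [← e1, ← e2]
        _ = 0 := by rw [hJJ]; ring
    have hnonneg : ∀ c ∈ Finset.Icc 1 (n-1), ∀ d ∈ Finset.Icc 1 (n-1),
        0 ≤ (1 - (-1:ℝ)^(c+d)) * (S 1 c * M c d * S 1 d) := by
      intro c hc d hd
      apply mul_nonneg
      · have : ((-1:ℝ))^(c+d) ≤ 1 := by
          rcases Nat.even_or_odd (c+d) with h | h
          · rw [h.neg_one_pow]
          · rw [h.neg_one_pow]; norm_num
        linarith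
      · exact mul_nonneg (mul_nonneg (hSpos c hc).le (hpos c hc d hd)) (hSpos d hd).le
    have hterm : ∀ c ∈ Finset.Icc 1 (n-1), ∀ d ∈ Finset.Icc 1 (n-1),
        (1 - (-1:ℝ)^(c+d)) * (S 1 c * M c d * S 1 d) = 0 := by
      intro c hc d hd
      have houter := (Finset.sum_eq_zero_iff_of_nonneg (fun c hc =>
        Finset.sum_nonneg (fun d hd => hnonneg c hc d hd))).1 hsum0 c hc
      exact (Finset.sum_eq_zero_iff_of_nonneg (fun d hd => hnonneg c hc d hd)).1 houter d hd
    intro c hc d hd hodd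
    have hterm' := hterm c hc d hd
    have hpow : ((-1:ℝ))^(c+d) = -1 := (Nat.odd_iff.2 hodd).neg_one_pow
    rw [hpow] at hterm'
    have hc' := hSpos c hc
    have hd' := hSpos d hd
    by_contra hM
    have hne : S 1 c * M c d * S 1 d ≠ 0 := by
      intro h
      rcases mul_eq_zero.1 h with h | h
      · rcases mul_eq_zero.1 h with h | h
        · exact absurd h hc'.ne'
        · exact hM h
      · exact absurd h hd'.ne'
    exact hne (by linarith)
  constructor
  · intro a ha b hb hM
    by_contra hab
    exact hM (hzero a ha b hb (by omega))
  · intro a ha b hb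
    simp only [Finset.mem_Icc] at ha hb
    have haT : a ∈ Finset.Icc 1 (n-1) := by simp [Finset.mem_Icc]; omega
    have hbT : b ∈ Finset.Icc 1 (n-1) := by simp [Finset.mem_Icc]; omega
    have haJ : n - a ∈ Finset.Icc 1 (n-1) := by simp [Finset.mem_Icc]; omega
    have hbJ : n - b ∈ Finset.Icc 1 (n-1) := by simp [Finset.mem_Icc]; omega
    rw [hSMS (n-a) haJ (n-b) hbJ, hSMS a haT b hbT]
    refine Finset.sum_congr rfl fun c hc => Finset.sum_congr rfl fun d hd => ?_
    rw [hSsymm d (n-b), hJ a c (by omega), hJ b d (by omega), hSsymm d b]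
    rcases Nat.even_or_odd (c + d) with h | h
    · have hc1 : ((-1:ℝ))^(c+1) * ((-1:ℝ))^(d+1) = 1 := by
        rw [← pow_add]
        have heq : c + 1 + (d + 1) = (c + d) + 2 := by ring
        rw [heq, pow_add, h.neg_one_pow]
        norm_num
      calc (-1:ℝ)^(c+1) * S a c * M c d * ((-1:ℝ)^(d+1) * S b d)
          = ((-1:ℝ)^(c+1) * (-1:ℝ)^(d+1)) * (S a c * M c d * S b d) := by ring
        _ = S a c * M c d * S b d := by rw [hc1]; ring
    · rw [hzero c hc d hd (Nat.odd_iff.1 h)]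
      ring
end

section
/- Let n ≥ 3 and a ∈ {2,...,n-2} with a² ≡ 1 (mod 4n). Suppose that for every integer ℓ coprime to n one has cos(π·ℓ·(a-1)/n) > cos(π·ℓ·(a+1)/n). Then either n = 12 and a = 7, or n = 30 and a ∈ {11, 19}. -/
open Real

private lemma sin_pos_mod'  (n k : ℕ) (hn : 0 < n)
    (h : 0 < Real.sin (π * (k : ℝ) / (n : ℝ))) : k % (2 * n) < n := by
  by_contra hge
  push_neg at hge
  set r := k % (2 * n) with hr
  set q := k / (2 * n) with hq
  have h2n : 0 < 2 * n := by omega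
  have hrlt : r < 2 * n := Nat.mod_lt _ h2n
  have hne : (n : ℝ) ≠ 0 := Nat.cast_ne_zero.mpr (by omega)
  have hnat : r + 2 * n * q = k := Nat.mod_add_div k (2 * n)
  have hkr : (k : ℝ) = (r : ℝ) + 2 * (n : ℝ) * (q : ℝ) := by exact_mod_cast hnat.symm
  have hsplit : π * (k : ℝ) / n = π * (r : ℝ) / n + ((q : ℤ) : ℝ) * (2 * π) := by
    push_cast
    field_simp
    linear_combination hkr
  rw [hsplit, Real.sin_add_int_mul_two_pi] at h
  have hπ := Real.pi_pos
  have hnr : (0 : ℝ) < n := by exact_mod_cast hn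
  have h1 : π ≤ π * (r : ℝ) / n := by
    rw [le_div_iff₀ hnr]
    have : (n : ℝ) ≤ r := by exact_mod_cast hge
    nlinarith
  have h2 : π * (r : ℝ) / n - π ≤ π := by
    rw [sub_le_iff_le_add, div_le_iff₀ hnr]
    have : (r : ℝ) ≤ 2 * n := by exact_mod_cast hrlt.le
    nlinarith
  have h3 := Real.sin_nonneg_of_nonneg_of_le_pi (sub_nonneg.mpr h1) h2
  rw [Real.sin_sub_pi] at h3
  linarith

theorem stmt_9 (n a : ℕ) (hn : 3 ≤ n) (ha1 : 2 ≤ a) (ha2 : a ≤ n - 2)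
    (hT : a ^ 2 ≡ 1 [MOD 4 * n])
    (hGal : ∀ ℓ : ℤ, Int.gcd ℓ n = 1 →
      Real.cos (π * ℓ * ((a : ℝ) - 1) / n) > Real.cos (π * ℓ * ((a : ℝ) + 1) / n)) :
    (n = 12 ∧ a = 7) ∨ (n = 30 ∧ (a = 11 ∨ a = 19)) := by
  have P : ∀ m : ℕ, 0 < m → m < n → Nat.gcd m n = 1 → (a * m) % (2 * n) < n := by
    have hn0 : 0 < n := by omega
    have hnr : (0 : ℝ) < n := by exact_mod_cast hn0
    have hne : (n : ℝ) ≠ 0 := ne_of_gt hnr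
    have hπ := Real.pi_pos
    intro m hm0 hmn hgcd
    have hg := hGal (m : ℤ) (by simpa using hgcd)
    push_cast at hg
    have key : Real.cos (π * (m : ℝ) * ((a : ℝ) - 1) / n) - Real.cos (π * (m : ℝ) * ((a : ℝ) + 1) / n)
        = 2 * Real.sin (π * ((a : ℝ) * m) / n) * Real.sin (π * (m : ℝ) / n) := by
      rw [Real.cos_sub_cos]
      have e1 : (π * (m : ℝ) * ((a : ℝ) - 1) / n + π * (m : ℝ) * ((a : ℝ) + 1) / n) / 2
          = π * ((a : ℝ) * m) / n := by field_simp; ring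
      have e2 : (π * (m : ℝ) * ((a : ℝ) - 1) / n - π * (m : ℝ) * ((a : ℝ) + 1) / n) / 2
          = -(π * (m : ℝ) / n) := by field_simp; ring
      rw [e1, e2, Real.sin_neg]
      ring
    have hsm : 0 < Real.sin (π * (m : ℝ) / n) := by
      apply Real.sin_pos_of_pos_of_lt_pi
      · have : (0:ℝ) < m := by exact_mod_cast hm0
        positivity
      · rw [div_lt_iff₀ hnr]
        have : (m : ℝ) < n := by exact_mod_cast hmn
        nlinarith
    have h2 : 0 < 2 * Real.sin (π * ((a : ℝ) * m) / n) * Real.sin (π * (m : ℝ) / n) := by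
      rw [← key]; linarith
    have hsin : 0 < Real.sin (π * ((a : ℝ) * m) / n) := by
      by_contra hns
      push_neg at hns
      nlinarith
    have hsin' : 0 < Real.sin (π * ((a * m : ℕ) : ℝ) / n) := by
      have : ((a * m : ℕ) : ℝ) = (a : ℝ) * m := by push_cast; ring
      rw [this]; exact hsin
    exact sin_pos_mod' n (a * m) hn0 hsin'
  have hn0 : 0 < n := by omega
  have ha2' : a + 2 ≤ n := by omega
  -- a is odd
  have hodd : Odd a := by
    rcases Nat.even_or_odd a with he | ho
    · exfalso
      obtain ⟨t, ht⟩ := he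
      have hT4 : a ^ 2 ≡ 1 [MOD 4] := hT.of_dvd (Dvd.intro n rfl)
      have h0 : a ^ 2 % 4 = 0 := by
        rw [ht, show (t + t) ^ 2 = 4 * t ^ 2 by ring]
        exact Nat.mul_mod_right 4 _
      have h1 : a ^ 2 % 4 = 1 % 4 := hT4
      omega
    · exact ho
  obtain ⟨c, hc⟩ := hodd
  have hc1 : 1 ≤ c := by omega
  -- n ∣ c * (c+1)
  have hz2 : ((4 * n : ℕ) : ℤ) ∣ ((a : ℤ) ^ 2 - 1) := by
    have h := hT.symm.dvd
    push_cast at h ⊢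
    exact h
  have hnST : n ∣ c * (c + 1) := by
    obtain ⟨k, hk⟩ := hz2
    have hca : (a : ℤ) = 2 * c + 1 := by exact_mod_cast hc
    have h4 : 4 * ((c : ℤ) * (c + 1)) = 4 * ((n : ℤ) * k) := by
      push_cast at hk
      linear_combination hk + (-(a : ℤ) - 2 * c - 1) * hca
    have hk2 : (c : ℤ) * (c + 1) = (n : ℤ) * k := by
      exact mul_left_cancel₀ (by norm_num : (4:ℤ) ≠ 0) h4
    have : ((n : ℕ) : ℤ) ∣ ((c * (c + 1) : ℕ) : ℤ) := ⟨k, by push_cast; exact hk2⟩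
    exact_mod_cast this
  -- construct d, e
  set d := Nat.gcd n c with hd_def
  have hd_n : d ∣ n := Nat.gcd_dvd_left n c
  have hd_c : d ∣ c := Nat.gcd_dvd_right n c
  have hd_pos : 0 < d := Nat.gcd_pos_of_pos_left c hn0
  set e := n / d with he_def
  have hde : d * e = n := Nat.mul_div_cancel' hd_n
  set u := c / d with hu_def
  have hu : d * u = c := Nat.mul_div_cancel' hd_c
  have hcop_eu : Nat.Coprime e u := Nat.coprime_div_gcd_div_gcd hd_pos
  have he_T : e ∣ c + 1 := by
    obtain ⟨k, hk⟩ := hnST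
    have hmain : d * (u * (c + 1)) = d * (e * k) := by
      calc d * (u * (c + 1)) = (d * u) * (c + 1) := by ring
        _ = c * (c + 1) := by rw [hu]
        _ = n * k := hk
        _ = (d * e) * k := by rw [hde]
        _ = d * (e * k) := by ring
    have : u * (c + 1) = e * k := Nat.eq_of_mul_eq_mul_left hd_pos hmain
    have hdvd : e ∣ (c + 1) * u := ⟨k, by rw [mul_comm]; exact this⟩
    exact hcop_eu.dvd_of_dvd_mul_right hdvd
  set v := (c + 1) / e with hv_def
  have hv : e * v = c + 1 := Nat.mul_div_cancel' he_T
  have hcop_c : Nat.Coprime c (c + 1) := by simp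
  have hcop_de : Nat.Coprime d e := Nat.Coprime.coprime_dvd_left hd_c
    (Nat.Coprime.coprime_dvd_right he_T hcop_c)
  -- bounds
  have he_le : e ≤ c + 1 := Nat.le_of_dvd (by omega) he_T
  have hd_le : d ≤ c := Nat.le_of_dvd (by omega) hd_c
  have hd3 : 3 ≤ d := by
    by_contra hd2
    push_neg at hd2
    have h1 : d * e ≤ 2 * e := Nat.mul_le_mul (by omega) (le_refl e)
    rw [hde] at h1
    omega
  have he3 : 3 ≤ e := by
    by_contra he2
    push_neg at he2
    have h1 : d * e ≤ d * 2 := Nat.mul_le_mul (le_refl d) (by omega)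
    rw [hde] at h1
    omega
  have heq : e * v = d * u + 1 := by rw [hv, hu]
  have ha' : a = 2 * (d * u) + 1 := by rw [hu]; exact hc
  -- the key lemma
  have K : ∀ s : ℕ, 0 < s → 2 * s < e → e < d * s → Nat.gcd s e = 1 → False := by
    intro s hs0 hs2 hs3 hsgcd
    -- d*s + e ≤ n
    have hw : d * s + e ≤ n := by
      have t1 : d * (2 * s + 1) ≤ d * e := Nat.mul_le_mul (le_refl d) (by omega)
      have t1' : 2 * (d * s) + d ≤ d * e := by
        calc 2 * (d * s) + d = d * (2 * s + 1) := by ring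
          _ ≤ d * e := t1
      have t2 : 2 * e ≤ d * e := Nat.mul_le_mul (by omega) (le_refl e)
      rw [← hde]
      generalize hA : d * s = A at t1' ⊢
      generalize hB : d * e = B at t1' t2 ⊢
      omega
    set m := d * s - e with hm_def
    have hm' : m + e = d * s := Nat.sub_add_cancel hs3.le
    have hm0 : 0 < m := Nat.sub_pos_of_lt hs3
    have hmn : m < n := by
      have hw' : (m + e) + e ≤ n := by rw [hm']; exact hw
      omega
    -- coprimality of m with n
    have hco_md : Nat.Coprime m d := by
      have g1 : Nat.gcd m d ∣ m := Nat.gcd_dvd_left m d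
      have g2 : Nat.gcd m d ∣ d := Nat.gcd_dvd_right m d
      have g3 : Nat.gcd m d ∣ m + e := by
        rw [hm']; exact g2.mul_right s
      have g4 : Nat.gcd m d ∣ e := by
        have := Nat.dvd_sub g3 g1
        rwa [Nat.add_sub_cancel_left] at this
      have : Nat.gcd m d ∣ Nat.gcd d e := Nat.dvd_gcd g2 g4
      rw [hcop_de] at this
      exact Nat.eq_one_of_dvd_one this
    have hco_me : Nat.Coprime m e := by
      have g1 : Nat.gcd m e ∣ m := Nat.gcd_dvd_left m e
      have g2 : Nat.gcd m e ∣ e := Nat.gcd_dvd_right m e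
      have g3 : Nat.gcd m e ∣ s * d := by
        rw [mul_comm, ← hm']
        exact Dvd.dvd.add g1 g2
      have gco : Nat.Coprime (Nat.gcd m e) d :=
        Nat.Coprime.coprime_dvd_left g2 hcop_de.symm
      have g5 : Nat.gcd m e ∣ s := gco.dvd_of_dvd_mul_right g3
      have : Nat.gcd m e ∣ Nat.gcd s e := Nat.dvd_gcd g5 g2
      rw [hsgcd] at this
      exact Nat.eq_one_of_dvd_one this
    have hco : Nat.Coprime m n := by
      rw [← hde]
      exact Nat.Coprime.mul_right hco_md hco_me
    have hP := P m hm0 hmn hco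
    -- now the integer computation
    have h1z : (m : ℤ) + e = d * s := by exact_mod_cast hm'
    have h2z : (e : ℤ) * v = d * u + 1 := by exact_mod_cast heq
    have h3z : (n : ℤ) = d * e := by exact_mod_cast hde.symm
    have h4z : (a : ℤ) = 2 * ((d : ℤ) * u) + 1 := by exact_mod_cast ha'
    have hIZ : (a : ℤ) * m = (2 * n - ((d : ℤ) * s + e)) + (2 * n) * ((v : ℤ) * s - u - 1) := by
      linear_combination (2 * (u : ℤ) - 2 * (v : ℤ) * (s : ℤ)) * h3z + (m : ℤ) * h4z
        + (2 * (d : ℤ) * (u : ℤ) + 1) * h1z - 2 * (d : ℤ) * (s : ℤ) * h2z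
    have hwz : (d : ℤ) * s + e ≤ n := by exact_mod_cast hw
    have hw0 : (0 : ℤ) < (d : ℤ) * s + e := by
      have : (0:ℤ) < (e:ℤ) := by exact_mod_cast (by omega : 0 < e)
      have hds : (0:ℤ) ≤ (d:ℤ) * s := by positivity
      linarith
    have hnz : (0 : ℤ) ≤ (n : ℤ) := by positivity
    have hmodz : (a : ℤ) * m % (2 * n) = 2 * n - ((d : ℤ) * s + e) := by
      rw [hIZ, Int.add_mul_emod_self_left]
      exact Int.emod_eq_of_lt (by linarith) (by linarith)
    have hPz : ((a : ℤ) * m) % (2 * (n : ℤ)) < (n : ℤ) := by exact_mod_cast hP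
    rw [hmodz] at hPz
    linarith
  -- e is even
  have he_even : e % 2 = 0 := by
    by_contra ho
    have ho' : e % 2 = 1 := by omega
    obtain ⟨s, hs⟩ : ∃ s, e = 2 * s + 1 := ⟨e / 2, by omega⟩
    have hs0 : 0 < s := by omega
    have hgcd : Nat.gcd s e = 1 := by
      have h1 : Nat.gcd s e ∣ s := Nat.gcd_dvd_left s e
      have h2 : Nat.gcd s e ∣ e := Nat.gcd_dvd_right s e
      have h3 : Nat.gcd s e ∣ e - 2 * s := Nat.dvd_sub h2 (h1.mul_left 2)
      have h4 : e - 2 * s = 1 := by omega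
      rw [h4] at h3
      exact Nat.eq_one_of_dvd_one h3
    apply K s hs0 (by omega) ?_ hgcd
    have h5 : 3 * s ≤ d * s := Nat.mul_le_mul hd3 (le_refl s)
    by_cases hse : 2 ≤ s
    · omega
    · have hs1 : s = 1 := by omega
      have he3' : e = 3 := by omega
      have hdne : d ≠ 3 := by
        intro h
        rw [h, he3'] at hcop_de
        exact absurd hcop_de (by decide)
      have hds : d * s = d := by rw [hs1, mul_one]
      omega
  rcases (by omega : e % 4 = 0 ∨ e % 4 = 2) with h4 | h4
  · -- e ≡ 0 mod 4 : forces e = 4, d = 3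
    obtain ⟨s, hs1, hs2⟩ : ∃ s, e = 2 * s + 2 ∧ s % 2 = 1 := ⟨e / 2 - 1, by omega⟩
    have hgcd : Nat.gcd s e = 1 := by
      have h1 : Nat.gcd s e ∣ s := Nat.gcd_dvd_left s e
      have h2 : Nat.gcd s e ∣ e := Nat.gcd_dvd_right s e
      have h3 : Nat.gcd s e ∣ e - 2 * s := Nat.dvd_sub h2 (h1.mul_left 2)
      have h4' : e - 2 * s = 2 := by omega
      rw [h4'] at h3
      rcases (Nat.dvd_prime Nat.prime_two).mp h3 with h | h
      · exact h
      · exfalso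
        have : 2 ∣ s := h ▸ h1
        omega
    have hds : d * s ≤ e := by
      by_contra hlt
      exact K s (by omega) (by omega) (by omega) hgcd
    have h5 : 3 * s ≤ d * s := Nat.mul_le_mul hd3 (le_refl s)
    have hs_eq : s = 1 := by omega
    have he_eq : e = 4 := by omega
    have hd_le : d ≤ 4 := by
      have : d * s = d := by rw [hs_eq, mul_one]
      omega
    have hd_eq : d = 3 := by
      rcases (by omega : d = 3 ∨ d = 4) with h | h
      · exact h
      · exfalso
        rw [h, he_eq] at hcop_de
        exact absurd hcop_de (by decide)
    rw [hd_eq] at hu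
    rw [he_eq] at hv
    rw [hd_eq, he_eq] at hde
    left
    constructor
    · omega
    · omega
  · -- e ≡ 2 mod 4 : forces (d,e) = (5,6) or (3,10)
    have he6 : 6 ≤ e := by omega
    obtain ⟨s, hs1, hs2⟩ : ∃ s, e = 2 * s + 4 ∧ s % 2 = 1 := ⟨e / 2 - 2, by omega⟩
    have hgcd : Nat.gcd s e = 1 := by
      have h1 : Nat.gcd s e ∣ s := Nat.gcd_dvd_left s e
      have h2 : Nat.gcd s e ∣ e := Nat.gcd_dvd_right s e
      have h3 : Nat.gcd s e ∣ e - 2 * s := Nat.dvd_sub h2 (h1.mul_left 2)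
      have h4' : e - 2 * s = 4 := by omega
      rw [h4'] at h3
      have hle : Nat.gcd s e ≤ 4 := Nat.le_of_dvd (by norm_num) h3
      have hge1 : 1 ≤ Nat.gcd s e := by
        rcases Nat.eq_zero_or_pos (Nat.gcd s e) with h | h
        · exfalso
          have := Nat.eq_zero_of_gcd_eq_zero_right h
          omega
        · exact h
      interval_cases h : Nat.gcd s e
      · rfl
      · exfalso
        obtain ⟨t, ht⟩ := h1
        omega
      · exfalso
        obtain ⟨t, ht⟩ := h3
        omega
      · exfalso
        obtain ⟨t, ht⟩ := h1
        omega
    have hds : d * s ≤ e := by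
      by_contra hlt
      exact K s (by omega) (by omega) (by omega) hgcd
    have h5 : 3 * s ≤ d * s := Nat.mul_le_mul hd3 (le_refl s)
    -- 3s ≤ 2s+4 so s ≤ 4, s odd: s = 1 or s = 3
    rcases (by omega : s = 1 ∨ s = 3) with hs_eq | hs_eq
    · -- e = 6, d = 5
      have he_eq : e = 6 := by omega
      have hd_le : d ≤ 6 := by
        have : d * s = d := by rw [hs_eq, mul_one]
        omega
      have hd_eq : d = 5 := by
        rcases (by omega : d = 3 ∨ d = 4 ∨ d = 5 ∨ d = 6) with h | h | h | h
        · exfalso; rw [h, he_eq] at hcop_de; exact absurd hcop_de (by decide)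
        · exfalso; rw [h, he_eq] at hcop_de; exact absurd hcop_de (by decide)
        · exact h
        · exfalso; rw [h, he_eq] at hcop_de; exact absurd hcop_de (by decide)
      rw [hd_eq] at hu
      rw [he_eq] at hv
      rw [hd_eq, he_eq] at hde
      right
      constructor
      · omega
      · left; omega
    · -- e = 10, d = 3
      have he_eq : e = 10 := by omega
      have hd_eq : d = 3 := by
        have : d * s = d * 3 := by rw [hs_eq]
        omega
      rw [hd_eq] at hu
      rw [he_eq] at hv
      rw [hd_eq, he_eq] at hde
      right
      constructor
      · omega
      · right; omega
end

section
/- Let n = 18. Then 2·sin(π·3/n) = 1, i.e. 2·sin(π/6) = 1. More generally, if n ≥ 10 with n ≡ 2 (mod 4) and 2·sin(3π/n) is a positive integer, then n = 18. -/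
open Real

theorem stmt_15 (n : ℕ) (hn : 10 ≤ n) (hn4 : n % 4 = 2) :
    2 * Real.sin (π * 3 / 18) = 1 ∧
    (∀ m : ℕ, 0 < m → 2 * Real.sin (3 * π / n) = m → n = 18) := by
  have hpi := Real.pi_pos
  constructor
  · have : π * 3 / 18 = π / 6 := by ring
    rw [this, Real.sin_pi_div_six]; ring
  · intro m hm hme
    have hn0 : (0:ℝ) < n := by positivity
    have hlt : 3 * π / n ≤ π / 2 := by
      rw [div_le_div_iff₀ hn0 two_pos]
      have : (10:ℝ) ≤ n := by exact_mod_cast hn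
      nlinarith
    have hgt : 0 < 3 * π / n := by positivity
    have hlt' : 3 * π / n < π / 2 := by
      rcases lt_or_eq_of_le hlt with h | h
      · exact h
      · exfalso
        have h6 : π * 6 = π * n := by field_simp at h; rw [← h]; ring
        have : (6:ℝ) = n := mul_left_cancel₀ hpi.ne' h6
        have : n = 6 := by exact_mod_cast this.symm
        omega
    have hs1 : Real.sin (3 * π / n) < 1 := by
      have := Real.strictMonoOn_sin ⟨by linarith, hlt⟩ ⟨by linarith, le_refl _⟩ hlt'
      simpa using this
    have hm2 : (m:ℝ) < 2 := by nlinarith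
    have hm2' : m < 2 := by exact_mod_cast hm2
    interval_cases m
    have hsin : Real.sin (3 * π / n) = Real.sin (π / 6) := by
      rw [Real.sin_pi_div_six]; push_cast at hme; linarith
    have := Real.injOn_sin (by constructor <;> nlinarith) (by constructor <;> nlinarith) hsin
    have hn18 : (n:ℝ) = 18 := by
      field_simp at this
      nlinarith
    exact_mod_cast hn18
end

section
/- For n = 12, the matrix M of the E₆ invariant, defined by M_{ab} = 1 if (a,b) ∈ {(1,1),(1,7),(7,1),(7,7),(4,4),(4,8),(8,4),(8,8),(5,5),(5,11),(11,5),(11,11)} and 0 otherwise, commutes with S and T, has nonnegative integer entries, and M_{11} = 1. -/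
/-!
Let `v₁ = e₁ + e₇`, `v₂ = e₄ + e₈`, `v₃ = e₅ + e₁₁`; then `M = Σₖ vₖ vₖᵀ`. A symmetric matrix `A`
commutes with such a Gram matrix as soon as `A vₖ = Σₗ cₗₖ vₗ` with `c` symmetric. For `T` the
`vₖ` are eigenvectors, because `1² ≡ 7²`, `4² ≡ 8²` and `5² ≡ 11² (mod 48)`. For `S` one computes
`S vₖ` after reducing `sin (π n / 12)` to `± sin (π r / 12)` with `0 ≤ r ≤ 6`.
-/

open Real Finset Complex

theorem sin_pi_mul_nat_div_eq (N n : ℕ) :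
    Real.sin (π * n / N) = (-1) ^ (n / N) * Real.sin (π * (min (n % N) (N - n % N) : ℕ) / N) := by
  rcases Nat.eq_zero_or_pos N with rfl | hN
  · simp
  have hN' : (N : ℝ) ≠ 0 := by positivity
  have hr : n % N ≤ N := (Nat.mod_lt n hN).le
  have hsplit : π * n / N = π * (n % N : ℕ) / N + (n / N : ℕ) * π := by
    conv_lhs => rw [← Nat.mod_add_div n N]
    push_cast
    field_simp
  have hfold : Real.sin (π * (N - n % N : ℕ) / N) = Real.sin (π * (n % N : ℕ) / N) := by
    rw [Nat.cast_sub hr, ← Real.sin_pi_sub]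
    congr 1
    field_simp
    ring
  rw [hsplit, Real.sin_add_nat_mul_pi]
  rcases le_total (n % N) (N - n % N) with h | h
  · rw [min_eq_left h]
  · rw [min_eq_right h, hfold]

theorem exp_pi_I_mul_div_eq_of_modEq {N m n : ℕ} (h : m ≡ n [MOD 2 * N]) :
    cexp (π * I * m / N) = cexp (π * I * n / N) := by
  rcases Nat.eq_zero_or_pos N with rfl | hN
  · simp
  have hN' : (N : ℂ) ≠ 0 := by exact_mod_cast hN.ne'
  obtain ⟨k, hk⟩ := Nat.modEq_iff_dvd.mp h.symm
  rw [Complex.exp_eq_exp_iff_exists_int]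
  refine ⟨k, ?_⟩
  have : (m : ℂ) = n + 2 * N * k := by
    rw [← sub_eq_iff_eq_add']
    exact_mod_cast hk
  rw [this]
  field_simp

theorem sum_gram_mul_eq_sum_mul_gram {ι κ R : Type*} [CommSemiring R] [Fintype κ] (s : Finset ι) (A M : ι → ι → R) (V : ι → κ → R)
    (C : κ → κ → R) (hM : ∀ a b, M a b = ∑ k, V a k * V b k)
    (hA : ∀ a ∈ s, ∀ b ∈ s, A a b = A b a) (hC : ∀ k l, C k l = C l k)
    (hAV : ∀ a ∈ s, ∀ k, ∑ c ∈ s, A a c * V c k = ∑ l, V a l * C l k)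
    {a b : ι} (ha : a ∈ s) (hb : b ∈ s) :
    ∑ c ∈ s, M a c * A c b = ∑ c ∈ s, A a c * M c b := calc
  ∑ c ∈ s, M a c * A c b = ∑ k, V a k * ∑ c ∈ s, A b c * V c k := by
    simp only [hM, Finset.sum_mul, Finset.mul_sum]
    rw [Finset.sum_comm]
    refine Finset.sum_congr rfl fun k _ => Finset.sum_congr rfl fun c hc => ?_
    rw [hA c hc b hb]
    ring
  _ = ∑ k, ∑ l, V a k * C k l * V b l := by
    simp only [hAV b hb, Finset.mul_sum, hC]
    refine Finset.sum_congr rfl fun k _ => Finset.sum_congr rfl fun l _ => ?_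
    ring
  _ = ∑ k, (∑ c ∈ s, A a c * V c k) * V b k := by
    simp only [hAV a ha, Finset.sum_mul]
    rw [Finset.sum_comm]
  _ = ∑ c ∈ s, A a c * M c b := by
    simp only [hM, Finset.sum_mul, Finset.mul_sum]
    rw [Finset.sum_comm]
    refine Finset.sum_congr rfl fun k _ => Finset.sum_congr rfl fun c _ => ?_
    ring

theorem sum_mul_diag_eq_sum_diag_mul {ι R : Type*} [CommSemiring R] [DecidableEq ι]
    (s : Finset ι) (M : ι → ι → R) (t : ι → R) (h : ∀ a b, M a b ≠ 0 → t a = t b)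
    {a b : ι} (ha : a ∈ s) (hb : b ∈ s) :
    ∑ c ∈ s, M a c * (t c * if c = b then 1 else 0) =
      ∑ c ∈ s, (t a * if a = c then 1 else 0) * M c b := by
  simp only [mul_ite, ite_mul, mul_one, mul_zero, zero_mul, Finset.sum_ite_eq', Finset.sum_ite_eq,
    if_pos ha, if_pos hb]
  by_cases hab : M a b = 0
  · simp [hab]
  · rw [h a b hab, mul_comm]

def e6Block : Fin 3 → Finset ℕ := ![{1, 7}, {4, 8}, {5, 11}]

def e6Vec (c : ℕ) (k : Fin 3) : ℂ := if c ∈ e6Block k then 1 else 0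

theorem eq_sum_e6Vec_mul_e6Vec (M : ℕ → ℕ → ℂ) (hM : ∀ a b, M a b =
      if ((a = 1 ∨ a = 7) ∧ (b = 1 ∨ b = 7)) ∨
         ((a = 4 ∨ a = 8) ∧ (b = 4 ∨ b = 8)) ∨
         ((a = 5 ∨ a = 11) ∧ (b = 5 ∨ b = 11)) then 1 else 0) (a b : ℕ) :
    M a b = ∑ k, e6Vec a k * e6Vec b k := by
  simp only [hM, Fin.sum_univ_three, e6Vec, e6Block, Fin.isValue, Matrix.cons_val_zero,
    Matrix.cons_val_one, Matrix.cons_val, mem_insert, mem_singleton, mul_ite, mul_one, mul_zero]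
  split_ifs <;> (try norm_num) <;> omega

theorem sum_mul_e6Vec (f : ℕ → ℂ) (k : Fin 3) :
    ∑ c ∈ Icc 1 11, f c * e6Vec c k = ∑ c ∈ e6Block k, f c := by
  have hsub : e6Block k ⊆ Icc 1 11 := by
    fin_cases k <;> decide
  simp only [e6Vec, mul_ite, mul_one, mul_zero, Finset.sum_ite_mem, Finset.inter_eq_right.2 hsub]

theorem mem_e6Block_of_sum_ne_zero {a b : ℕ} (h : ∑ k, e6Vec a k * e6Vec b k ≠ 0) :
    ∃ k, a ∈ e6Block k ∧ b ∈ e6Block k := by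
  obtain ⟨k, -, hk⟩ := Finset.exists_ne_zero_of_sum_ne_zero h
  refine ⟨k, ?_, ?_⟩ <;> by_contra hc <;> simp [e6Vec, hc] at hk

theorem sq_modEq_of_mem_e6Block {a b : ℕ} {k : Fin 3} (ha : a ∈ e6Block k)
    (hb : b ∈ e6Block k) : a ^ 2 ≡ b ^ 2 [MOD 2 * 24] := by
  fin_cases k <;> simp only [e6Block, Fin.zero_eta, Fin.mk_one, Fin.reduceFinMk, Matrix.cons_val,
    Finset.mem_insert, Finset.mem_singleton] at ha hb <;>
    rcases ha with rfl | rfl <;> rcases hb with rfl | rfl <;> decide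

theorem exp_sq_eq_of_sum_e6Vec_ne_zero {a b : ℕ} (h : ∑ k, e6Vec a k * e6Vec b k ≠ 0) :
    cexp (π * I * a ^ 2 / 24) = cexp (π * I * b ^ 2 / 24) := by
  obtain ⟨k, ha, hb⟩ := mem_e6Block_of_sum_ne_zero h
  simpa using exp_pi_I_mul_div_eq_of_modEq (sq_modEq_of_mem_e6Block ha hb)

-- The matrix of `S / √(2/12)` on `v₁, v₂, v₃`: `S vₖ = √(2/12) • Σₗ e6SinCoeff l k • vₗ`.
noncomputable def e6SinCoeff : Fin 3 → Fin 3 → ℝ :=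
  let x := Real.sin (π / 12) + Real.sin (π * 5 / 12)
  let y := 2 * Real.sin (π * 4 / 12)
  ![![x, y, x], ![y, 0, -y], ![x, -y, x]]

theorem e6SinCoeff_symm (k l : Fin 3) : e6SinCoeff k l = e6SinCoeff l k := by
  fin_cases k <;> fin_cases l <;> rfl

theorem sum_e6Block_sin (b : ℕ) (hb : b ∈ Icc 1 11) (k : Fin 3) :
    ∑ c ∈ e6Block k, Real.sin (π * b * c / 12) =
      ∑ l, if b ∈ e6Block l then e6SinCoeff l k else 0 := by
  have hsin : ∀ c : ℕ, Real.sin (π * b * c / 12) = (-1) ^ (b * c / 12) *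
      Real.sin (π * (min (b * c % 12) (12 - b * c % 12) : ℕ) / 12) := fun c => by
    have h := sin_pi_mul_nat_div_eq 12 (b * c)
    simp only [Nat.cast_ofNat] at h
    rw [← h]
    congr 1
    push_cast
    ring
  simp only [hsin, Fin.sum_univ_three]
  obtain ⟨hb1, hb2⟩ := Finset.mem_Icc.mp hb
  fin_cases k <;> simp [e6Block, e6SinCoeff] <;> interval_cases b <;> norm_num <;> ring

theorem sum_mul_e6Vec_of_sin {S : ℕ → ℕ → ℂ}
    (hS : ∀ a b, S a b = ((Real.sqrt (2 / 12) * Real.sin (π * a * b / 12) : ℝ) : ℂ))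
    (b : ℕ) (hb : b ∈ Icc 1 11) (k : Fin 3) :
    ∑ c ∈ Icc 1 11, S b c * e6Vec c k =
      ∑ l, e6Vec b l * ((√(2 / 12) * e6SinCoeff l k : ℝ) : ℂ) := by
  rw [sum_mul_e6Vec]
  simp only [hS, e6Vec, ite_mul, one_mul, zero_mul]
  have h := congrArg (fun x : ℝ => ((√(2 / 12) * x : ℝ) : ℂ)) (sum_e6Block_sin b hb k)
  simpa [Finset.mul_sum, mul_ite, apply_ite Complex.ofReal] using h

theorem stmt_16 (S T M : ℕ → ℕ → ℂ)
    (hS : ∀ a b, S a b =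
      ((Real.sqrt (2 / 12) * Real.sin (π * a * b / 12) : ℝ) : ℂ))
    (hT : ∀ a b, T a b =
      Complex.exp (Real.pi * Complex.I * a ^ 2 / 24) * (if a = b then 1 else 0))
    (hM : ∀ a b, M a b =
      if ((a = 1 ∨ a = 7) ∧ (b = 1 ∨ b = 7)) ∨
         ((a = 4 ∨ a = 8) ∧ (b = 4 ∨ b = 8)) ∨
         ((a = 5 ∨ a = 11) ∧ (b = 5 ∨ b = 11)) then 1 else 0) :
    (∀ a ∈ Finset.Icc 1 11, ∀ b ∈ Finset.Icc 1 11,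
      ∑ c ∈ Finset.Icc 1 11, M a c * S c b = ∑ c ∈ Finset.Icc 1 11, S a c * M c b) ∧
    (∀ a ∈ Finset.Icc 1 11, ∀ b ∈ Finset.Icc 1 11,
      ∑ c ∈ Finset.Icc 1 11, M a c * T c b = ∑ c ∈ Finset.Icc 1 11, T a c * M c b) ∧
    (∀ a ∈ Finset.Icc 1 11, ∀ b ∈ Finset.Icc 1 11, ∃ m : ℕ, M a b = m) ∧
    M 1 1 = 1 := by
  have hgram := eq_sum_e6Vec_mul_e6Vec M hM
  refine ⟨fun a ha b hb => ?_, fun a ha b hb => ?_, fun a _ b _ => ?_, by simp [hM]⟩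
  · have hS_symm : ∀ a ∈ Icc 1 11, ∀ b ∈ Icc 1 11, S a b = S b a := fun a _ b _ => by
      rw [hS, hS, mul_right_comm (π : ℝ)]
    exact sum_gram_mul_eq_sum_mul_gram _ S M e6Vec _ hgram hS_symm
      (fun k l => by rw [e6SinCoeff_symm]) (sum_mul_e6Vec_of_sin hS) ha hb
  · simp only [hT]
    exact sum_mul_diag_eq_sum_diag_mul _ M _
      (fun a b hab => exp_sq_eq_of_sum_e6Vec_ne_zero (hgram a b ▸ hab)) ha hb
  · rw [hM]
    split_ifs
    exacts [⟨1, Nat.cast_one.symm⟩, ⟨0, Nat.cast_zero.symm⟩]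
end

section
/- For n = 30, the matrix M of the E₈ invariant, i.e., the coefficient matrix of |χ₁+χ₁₁+χ₁₉+χ₂₉|² + |χ₇+χ₁₃+χ₁₇+χ₂₃|², commutes with S and T, has nonnegative integer entries, and M_{11} = 1. -/
/-!
Put `s(u) = ∑_{h ∈ H} sin(π h u / 30)` for `u : ZMod 60`, where `H = {1, 11, 19, 29}` is a
subgroup of `(ZMod 60)ˣ`; the two blocks of `M` are the cosets `H` and `7H = {7, 13, 17, 23}`,
and `7 · 7H = -H`. Reindexing the sum gives `s(h u) = s(u)` for `h ∈ H`, while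
`s(-u) = s(u + 30) = -s(u)`; so `s` vanishes off the units, and the sums of `S` over the blocks
are `S 1_X = α 1_X + β 1_Y`, `S 1_Y = β 1_X - α 1_Y` with `α = s(1)`, `β = s(7)` (up to the
factor `√(2/30)`). As `M = 1_X 1_Xᵀ + 1_Y 1_Yᵀ` and `S` is symmetric, `MS` and `SM` are then the
same symmetric combination of the `1_· 1_·ᵀ`. `T` is diagonal and `a² ≡ b² mod 120` within each
block, so `M` also commutes with `T`.
-/

open Real Finset Complex

noncomputable def sinZMod (N : ℕ) (u : ZMod N) : ℝ := Real.sin (2 * π * u.val / N)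

section sinZMod

variable {N : ℕ} [NeZero N]

theorem sinZMod_intCast (k : ℤ) : sinZMod N k = Real.sin (2 * π * k / N) := by
  have hN : (N : ℝ) ≠ 0 := Nat.cast_ne_zero.mpr (NeZero.ne N)
  have hval : (((k : ZMod N).val : ℤ) : ℝ) = k - N * (k / N : ℤ) := by
    rw [ZMod.val_intCast, Int.emod_def]; push_cast; ring
  rw [sinZMod, ← Int.cast_natCast, hval, ← Real.sin_add_int_mul_two_pi _ (k / N : ℤ)]
  congr 1
  field_simp
  ring

theorem sinZMod_natCast (k : ℕ) : sinZMod N k = Real.sin (2 * π * k / N) := by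
  simpa using sinZMod_intCast (N := N) k

theorem sinZMod_neg (u : ZMod N) : sinZMod N (-u) = -sinZMod N u := by
  obtain ⟨k, rfl⟩ := ZMod.intCast_surjective u
  rw [← Int.cast_neg, sinZMod_intCast, sinZMod_intCast, ← Real.sin_neg]
  push_cast; ring_nf

theorem sinZMod_add_half {m : ℕ} (hN : N = 2 * m) (u : ZMod N) :
    sinZMod N (u + m) = -sinZMod N u := by
  obtain ⟨k, rfl⟩ := ZMod.intCast_surjective u
  have hm : (m : ℝ) ≠ 0 := by
    rintro h; simp_all
  rw [← Int.cast_natCast m, ← Int.cast_add, sinZMod_intCast, sinZMod_intCast, ← Real.sin_add_pi]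
  congr 1
  rw [hN]; push_cast; field_simp

end sinZMod

theorem Complex.exp_pi_mul_I_mul_div_eq_of_modEq {n : ℕ} (hn : n ≠ 0) {k l : ℤ}
    (h : k ≡ l [ZMOD 2 * n]) :
    Complex.exp (π * I * k / n) = Complex.exp (π * I * l / n) := by
  obtain ⟨q, hq⟩ := Int.modEq_iff_dvd.mp h.symm
  have hk : (k : ℂ) = l + 2 * n * q := by
    rw [← sub_eq_iff_eq_add']; exact_mod_cast hq
  have hn' : (n : ℂ) ≠ 0 := Nat.cast_ne_zero.mpr hn
  rw [hk, show (π : ℂ) * I * (l + 2 * n * q) / n = π * I * l / n + q * (2 * π * I) by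
    field_simp, Complex.exp_add, Complex.exp_int_mul_two_pi_mul_I, mul_one]

section BlockMatrix

variable {ι R : Type*} [DecidableEq ι] {s X Y : Finset ι}

theorem sum_blockIndicator_mul [CommSemiring R] (hX : X ⊆ s) (hY : Y ⊆ s) (hXY : Disjoint X Y)
    (a : ι) (f : ι → R) :
    ∑ c ∈ s, (if (a ∈ X ∧ c ∈ X) ∨ (a ∈ Y ∧ c ∈ Y) then 1 else 0) * f c =
      (if a ∈ X then ∑ c ∈ X, f c else 0) + (if a ∈ Y then ∑ c ∈ Y, f c else 0) := by
  by_cases haX : a ∈ X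
  · have haY : a ∉ Y := Finset.disjoint_left.mp hXY haX
    simp [haX, haY, Finset.sum_ite_mem, Finset.inter_eq_right.mpr hX]
  · by_cases haY : a ∈ Y <;> simp [haX, haY, Finset.sum_ite_mem, Finset.inter_eq_right.mpr hY]

theorem sum_block_mul_comm [CommRing R] (hX : X ⊆ s) (hY : Y ⊆ s) (hXY : Disjoint X Y)
    {M S : ι → ι → R} (hM : ∀ a b, M a b = if (a ∈ X ∧ b ∈ X) ∨ (a ∈ Y ∧ b ∈ Y) then 1 else 0)
    (hS : ∀ a b, S a b = S b a) {α β : R}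
    (hSX : ∀ b ∈ s, ∑ c ∈ X, S c b = (if b ∈ X then α else 0) + (if b ∈ Y then β else 0))
    (hSY : ∀ b ∈ s, ∑ c ∈ Y, S c b = (if b ∈ X then β else 0) + (if b ∈ Y then -α else 0))
    {a b : ι} (ha : a ∈ s) (hb : b ∈ s) :
    ∑ c ∈ s, M a c * S c b = ∑ c ∈ s, S a c * M c b := by
  have hMS : ∑ c ∈ s, S a c * M c b = ∑ c ∈ s, M b c * S c a := by
    refine Finset.sum_congr rfl fun c _ => ?_
    rw [mul_comm, hS]
    simp only [hM, and_comm]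
  rw [hMS]
  simp only [hM, sum_blockIndicator_mul hX hY hXY, hSX a ha, hSX b hb, hSY a ha, hSY b hb]
  split_ifs <;> ring

theorem sum_mul_diagonal_comm [CommSemiring R] (M : ι → ι → R) (d : ι → R) {a b : ι}
    (ha : a ∈ s) (hb : b ∈ s) (h : M a b ≠ 0 → d a = d b) :
    ∑ c ∈ s, M a c * (d c * if c = b then 1 else 0) =
      ∑ c ∈ s, (d a * if a = c then 1 else 0) * M c b := by
  simp only [mul_ite, ite_mul, mul_one, mul_zero, zero_mul, Finset.sum_ite_eq, Finset.sum_ite_eq',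
    ha, hb, if_true]
  by_cases hM : M a b = 0
  · simp [hM]
  · rw [h hM, mul_comm]

end BlockMatrix

def blockSubgroup : Finset (ZMod 60) := {1, 11, 19, 29}

noncomputable def orbitSum (u : ZMod 60) : ℝ := ∑ h ∈ blockSubgroup, sinZMod 60 (h * u)

theorem orbitSum_eq (u : ZMod 60) :
    orbitSum u = sinZMod 60 u + sinZMod 60 (11 * u) + sinZMod 60 (19 * u) + sinZMod 60 (29 * u) := by
  rw [orbitSum, blockSubgroup, Finset.sum_insert (by decide), Finset.sum_insert (by decide),
    Finset.sum_insert (by decide), Finset.sum_singleton, one_mul]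
  ring

theorem orbitSum_mul {h : ZMod 60} (hh : h ∈ blockSubgroup) (u : ZMod 60) :
    orbitSum (h * u) = orbitSum u := by
  have hclosed : ∀ c ∈ blockSubgroup, c * h ∈ blockSubgroup := by
    revert h; decide
  have hsq : ∀ h ∈ blockSubgroup, h * h = 1 := by decide
  have hinv : ∀ c : ZMod 60, c * h * h = c := fun c => by rw [mul_assoc, hsq h hh, mul_one]
  exact Finset.sum_nbij' (· * h) (· * h) hclosed hclosed (fun c _ => hinv c) (fun c _ => hinv c)
    (fun c _ => by ring_nf)

theorem orbitSum_neg (u : ZMod 60) : orbitSum (-u) = -orbitSum u := by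
  simp only [orbitSum, mul_neg, sinZMod_neg, Finset.sum_neg_distrib]

theorem orbitSum_add_thirty (u : ZMod 60) : orbitSum (u + 30) = -orbitSum u := by
  have h30 : ∀ h ∈ blockSubgroup, h * 30 = ((30 : ℕ) : ZMod 60) := by decide
  rw [orbitSum, orbitSum, ← Finset.sum_neg_distrib]
  refine Finset.sum_congr rfl fun h hh => ?_
  rw [mul_add, h30 h hh, sinZMod_add_half (by norm_num)]

theorem orbitSum_eq_zero {h u : ZMod 60} (hh : h ∈ blockSubgroup)
    (hu : h * u = -u ∨ h * u = u + 30) : orbitSum u = 0 := by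
  have := orbitSum_mul hh u
  rcases hu with hu | hu
  · rw [hu, orbitSum_neg] at this; linarith
  · rw [hu, orbitSum_add_thirty] at this; linarith

theorem disjoint_blocks : Disjoint ({1, 11, 19, 29} : Finset ℕ) {7, 13, 17, 23} := by
  decide

theorem natCast_coset_trichotomy : ∀ b ∈ Finset.Icc 1 29,
    (b ∈ ({1, 11, 19, 29} : Finset ℕ) ∧ (b : ZMod 60) ∈ blockSubgroup) ∨
    (b ∈ ({7, 13, 17, 23} : Finset ℕ) ∧ ∃ h ∈ blockSubgroup, (b : ZMod 60) = h * 7) ∨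
    (b ∉ ({1, 11, 19, 29} : Finset ℕ) ∧ b ∉ ({7, 13, 17, 23} : Finset ℕ) ∧
      ∀ k ∈ ({1, 7} : Finset (ZMod 60)), ∃ h ∈ blockSubgroup,
        h * (k * b) = -(k * b) ∨ h * (k * b) = k * b + 30) := by
  decide

theorem orbitSum_natCast_eq {b : ℕ} (hb : b ∈ Finset.Icc 1 29) :
    orbitSum b = (if b ∈ ({1, 11, 19, 29} : Finset ℕ) then orbitSum 1 else 0) +
      (if b ∈ ({7, 13, 17, 23} : Finset ℕ) then orbitSum 7 else 0) ∧
    orbitSum (7 * b) = (if b ∈ ({1, 11, 19, 29} : Finset ℕ) then orbitSum 7 else 0) +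
      (if b ∈ ({7, 13, 17, 23} : Finset ℕ) then -orbitSum 1 else 0) := by
  rcases natCast_coset_trichotomy b hb with ⟨hX, hH⟩ | ⟨hY, h, hh, hbh⟩ | ⟨hX, hY, hzero⟩
  · have hY := Finset.disjoint_left.mp disjoint_blocks hX
    simp only [hX, hY, if_true, if_false, add_zero]
    constructor
    · simpa using orbitSum_mul hH 1
    · rw [mul_comm]; exact orbitSum_mul hH 7
  · have hX := Finset.disjoint_right.mp disjoint_blocks hY
    have h49 : (7 * (h * 7) : ZMod 60) = -(11 * h) := by
      rw [show (7 * (h * 7) : ZMod 60) = 49 * h by ring, neg_mul_eq_neg_mul]; rfl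
    simp only [hX, hY, if_true, if_false, zero_add, hbh]
    constructor
    · exact orbitSum_mul hh 7
    · rw [h49, orbitSum_neg, orbitSum_mul (by decide), ← mul_one h, orbitSum_mul hh]
  · simp only [hX, hY, if_false, add_zero]
    obtain ⟨h, hh, hu⟩ := hzero 1 (by decide)
    obtain ⟨h', hh', hu'⟩ := hzero 7 (by decide)
    rw [one_mul] at hu
    exact ⟨orbitSum_eq_zero hh hu, orbitSum_eq_zero hh' hu'⟩

theorem sin_eq_sinZMod (c b : ℕ) : Real.sin (π * c * b / 30) = sinZMod 60 (c * b) := by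
  rw [← Nat.cast_mul, sinZMod_natCast]
  push_cast; ring_nf

theorem sum_sin_blockOne (b : ℕ) :
    ∑ c ∈ ({1, 11, 19, 29} : Finset ℕ), Real.sin (π * c * b / 30) = orbitSum b := by
  simp only [sin_eq_sinZMod, mem_insert, OfNat.one_ne_ofNat, mem_singleton, or_self,
    not_false_eq_true, sum_insert, Nat.cast_one, one_mul, Nat.reduceEqDiff, Nat.cast_ofNat,
    sum_singleton, orbitSum_eq]
  ring

theorem sum_sin_blockSeven (b : ℕ) :
    ∑ c ∈ ({7, 13, 17, 23} : Finset ℕ), Real.sin (π * c * b / 30) = orbitSum (7 * b) := by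
  simp only [sin_eq_sinZMod, mem_insert, Nat.reduceEqDiff, mem_singleton, or_self,
    not_false_eq_true, sum_insert, Nat.cast_ofNat, sum_singleton, orbitSum_eq]
  ring_nf
  reduce_mod_char
  ring

theorem exp_sq_eq_of_mem_block {a b : ℕ}
    (h : (a ∈ ({1, 11, 19, 29} : Finset ℕ) ∧ b ∈ ({1, 11, 19, 29} : Finset ℕ)) ∨
      (a ∈ ({7, 13, 17, 23} : Finset ℕ) ∧ b ∈ ({7, 13, 17, 23} : Finset ℕ))) :
    Complex.exp (π * I * a ^ 2 / 60) = Complex.exp (π * I * b ^ 2 / 60) := by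
  have hsq : a ^ 2 ≡ b ^ 2 [MOD 2 * 60] := by
    rcases h with ⟨ha, hb⟩ | ⟨ha, hb⟩ <;> fin_cases ha <;> fin_cases hb <;> decide
  have := Complex.exp_pi_mul_I_mul_div_eq_of_modEq (by norm_num) (Int.natCast_modEq_iff.mpr hsq)
  push_cast at this
  exact this

theorem stmt_17 (S T M : ℕ → ℕ → ℂ)
    (hS : ∀ a b, S a b =
      ((Real.sqrt (2 / 30) * Real.sin (π * a * b / 30) : ℝ) : ℂ))
    (hT : ∀ a b, T a b =
      Complex.exp (Real.pi * Complex.I * a ^ 2 / 60) * (if a = b then 1 else 0))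
    (hM : ∀ a b, M a b =
      if (a ∈ ({1, 11, 19, 29} : Finset ℕ) ∧ b ∈ ({1, 11, 19, 29} : Finset ℕ)) ∨
         (a ∈ ({7, 13, 17, 23} : Finset ℕ) ∧ b ∈ ({7, 13, 17, 23} : Finset ℕ))
      then 1 else 0) :
    (∀ a ∈ Finset.Icc 1 29, ∀ b ∈ Finset.Icc 1 29,
      ∑ c ∈ Finset.Icc 1 29, M a c * S c b = ∑ c ∈ Finset.Icc 1 29, S a c * M c b) ∧
    (∀ a ∈ Finset.Icc 1 29, ∀ b ∈ Finset.Icc 1 29,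
      ∑ c ∈ Finset.Icc 1 29, M a c * T c b = ∑ c ∈ Finset.Icc 1 29, T a c * M c b) ∧
    (∀ a ∈ Finset.Icc 1 29, ∀ b ∈ Finset.Icc 1 29, ∃ m : ℕ, M a b = m) ∧
    M 1 1 = 1 := by
  have hX : ({1, 11, 19, 29} : Finset ℕ) ⊆ Finset.Icc 1 29 := by decide
  have hY : ({7, 13, 17, 23} : Finset ℕ) ⊆ Finset.Icc 1 29 := by decide
  have hS_symm : ∀ a b, S a b = S b a := fun a b => by rw [hS, hS, mul_right_comm π]
  have hS_sum : ∀ (s : Finset ℕ) b,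
      ∑ c ∈ s, S c b = ((√(2 / 30) * ∑ c ∈ s, Real.sin (π * c * b / 30) : ℝ) : ℂ) := by
    intro s b
    simp only [hS, Finset.mul_sum, Complex.ofReal_sum]
  refine ⟨fun a ha b hb => sum_block_mul_comm hX hY disjoint_blocks hM hS_symm
      (α := ((√(2 / 30) * orbitSum 1 : ℝ) : ℂ)) (β := ((√(2 / 30) * orbitSum 7 : ℝ) : ℂ))
      ?_ ?_ ha hb, fun a ha b hb => ?_, fun a _ b _ => ?_, by simp [hM]⟩
  · intro b hb
    rw [hS_sum, sum_sin_blockOne, (orbitSum_natCast_eq hb).1]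
    split_ifs <;> push_cast <;> ring
  · intro b hb
    rw [hS_sum, sum_sin_blockSeven, (orbitSum_natCast_eq hb).2]
    split_ifs <;> push_cast <;> ring
  · simp only [hT]
    refine sum_mul_diagonal_comm M _ ha hb fun hab => exp_sq_eq_of_mem_block ?_
    by_contra h
    exact hab (by rw [hM, if_neg h])
  · rw [hM]
    split_ifs
    exacts [⟨1, Nat.cast_one.symm⟩, ⟨0, Nat.cast_zero.symm⟩]
end

section
/- Let n ≥ 3 with n ≡ 0 (mod 4). Define M by M_{ab} = 1 if b = a and a odd, or b = n - a and a even, and M_{ab} = 0 otherwise. Then M commutes with S and T. (This is the D-series invariant for n/2 even.) -/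
open Real Finset Complex

theorem stmt_18 (n : ℕ) (hn : 3 ≤ n) (hn4 : 4 ∣ n) (S T M : ℕ → ℕ → ℂ)
    (hS : ∀ a b, S a b =
      ((Real.sqrt (2 / n) * Real.sin (π * a * b / n) : ℝ) : ℂ))
    (hT : ∀ a b, T a b =
      Complex.exp (Real.pi * Complex.I * a ^ 2 / (2 * n)) * (if a = b then 1 else 0))
    (hM : ∀ a b, M a b =
      if (a % 2 = 1 ∧ b = a) ∨ (a % 2 = 0 ∧ b = n - a) then 1 else 0) :
    (∀ a ∈ Finset.Icc 1 (n - 1), ∀ b ∈ Finset.Icc 1 (n - 1),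
      ∑ c ∈ Finset.Icc 1 (n - 1), M a c * S c b =
      ∑ c ∈ Finset.Icc 1 (n - 1), S a c * M c b) ∧
    (∀ a ∈ Finset.Icc 1 (n - 1), ∀ b ∈ Finset.Icc 1 (n - 1),
      ∑ c ∈ Finset.Icc 1 (n - 1), M a c * T c b =
      ∑ c ∈ Finset.Icc 1 (n - 1), T a c * M c b) := by
  have hn0 : (0:ℝ) < n := by positivity
  have h2 : 2 ∣ n := dvd_trans ⟨2, rfl⟩ hn4
  -- flip lemma for sin
  have flip : ∀ a b : ℕ, a ≤ n → Real.sin (π * ((n - a : ℕ)) * b / n)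
      = -((-1) ^ b * Real.sin (π * a * b / n)) := by
    intro a b hab
    have : (π * ((n - a : ℕ) : ℝ) * b / n) = b * π - π * a * b / n := by
      rw [Nat.cast_sub hab]
      field_simp
    rw [this, Real.sin_nat_mul_pi_sub]
  have flip' : ∀ a b : ℕ, b ≤ n → Real.sin (π * a * ((n - b : ℕ)) / n)
      = -((-1) ^ a * Real.sin (π * a * b / n)) := by
    intro a b hab
    have : (π * a * ((n - b : ℕ) : ℝ) / n) = a * π - π * a * b / n := by
      rw [Nat.cast_sub hab]
      field_simp
    rw [this, Real.sin_nat_mul_pi_sub]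
  refine ⟨?_, ?_⟩
  · intro a ha b hb
    rw [Finset.mem_Icc] at ha hb
    set A := if a % 2 = 1 then a else n - a with hA
    set B := if b % 2 = 1 then b else n - b with hB
    have hAmem : A ∈ Finset.Icc 1 (n-1) := by
      rw [Finset.mem_Icc, hA]; split_ifs <;> omega
    have hBmem : B ∈ Finset.Icc 1 (n-1) := by
      rw [Finset.mem_Icc, hB]; split_ifs <;> omega
    have hL : ∑ c ∈ Finset.Icc 1 (n - 1), M a c * S c b = S A b := by
      rw [Finset.sum_eq_single A]
      · rw [hM, if_pos, one_mul]
        rw [hA]; split_ifs with h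
        · exact Or.inl ⟨h, rfl⟩
        · exact Or.inr ⟨by omega, rfl⟩
      · intro c hc hne
        rw [Finset.mem_Icc] at hc
        rw [hM, if_neg, zero_mul]
        intro hcon
        apply hne
        rw [hA]
        rcases hcon with ⟨h1, h2⟩ | ⟨h1, h2⟩
        · rw [if_pos h1]; exact h2
        · rw [if_neg (by omega)]; exact h2
      · intro h; exact absurd hAmem h
    have hR : ∑ c ∈ Finset.Icc 1 (n - 1), S a c * M c b = S a B := by
      rw [Finset.sum_eq_single B]
      · rw [hM, if_pos, mul_one]
        rw [hB]; split_ifs with h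
        · exact Or.inl ⟨h, rfl⟩
        · exact Or.inr ⟨by omega, by omega⟩
      · intro c hc hne
        rw [Finset.mem_Icc] at hc
        rw [hM, if_neg, mul_zero]
        intro hcon
        apply hne
        rw [hB]
        rcases hcon with ⟨h1, h2⟩ | ⟨h1, h2⟩
        · rw [if_pos (by omega)]; omega
        · rw [if_neg (by omega)]; omega
      · intro h; exact absurd hBmem h
    rw [hL, hR, hS, hS]
    norm_cast
    rcases Nat.mod_two_eq_zero_or_one a with ha2 | ha2 <;>
      rcases Nat.mod_two_eq_zero_or_one b with hb2 | hb2
    · -- a even, b even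
      rw [hA, hB, if_neg (by omega), if_neg (by omega),
        flip a b (by omega), flip' a b (by omega)]
      obtain ⟨k, hk⟩ : ∃ k, a = 2 * k := ⟨a / 2, by omega⟩
      obtain ⟨l, hl⟩ : ∃ l, b = 2 * l := ⟨b / 2, by omega⟩
      subst hk hl
      rw [pow_mul, pow_mul]
      norm_num
    · -- a even, b odd
      rw [hA, hB, if_neg (by omega), if_pos hb2, flip a b (by omega)]
      obtain ⟨l, hl⟩ : ∃ l, b = 2 * l + 1 := ⟨b / 2, by omega⟩
      subst hl
      rw [pow_add, pow_mul]
      norm_num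
    · -- a odd, b even
      rw [hA, hB, if_pos ha2, if_neg (by omega), flip' a b (by omega)]
      obtain ⟨k, hk⟩ : ∃ k, a = 2 * k + 1 := ⟨a / 2, by omega⟩
      subst hk
      rw [pow_add, pow_mul]
      norm_num
    · rw [hA, hB, if_pos ha2, if_pos hb2]
  · intro a ha b hb
    rw [Finset.mem_Icc] at ha hb
    set A := if a % 2 = 1 then a else n - a with hA
    have hAmem : A ∈ Finset.Icc 1 (n-1) := by
      rw [Finset.mem_Icc, hA]; split_ifs <;> omega
    have hamem : a ∈ Finset.Icc 1 (n-1) := by rw [Finset.mem_Icc]; exact ha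
    have hL : ∑ c ∈ Finset.Icc 1 (n - 1), M a c * T c b = T A b := by
      rw [Finset.sum_eq_single A]
      · rw [hM, if_pos, one_mul]
        rw [hA]; split_ifs with h
        · exact Or.inl ⟨h, rfl⟩
        · exact Or.inr ⟨by omega, rfl⟩
      · intro c hc hne
        rw [Finset.mem_Icc] at hc
        rw [hM, if_neg, zero_mul]
        intro hcon
        apply hne
        rw [hA]
        rcases hcon with ⟨h1, h2⟩ | ⟨h1, h2⟩
        · rw [if_pos h1]; exact h2
        · rw [if_neg (by omega)]; exact h2
      · intro h; exact absurd hAmem h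
    have hR : ∑ c ∈ Finset.Icc 1 (n - 1), T a c * M c b = T a a * M a b := by
      rw [Finset.sum_eq_single a]
      · intro c hc hne
        rw [hT, if_neg (fun h => hne h.symm), mul_zero, zero_mul]
      · intro h; exact absurd hamem h
    rw [hL, hR]
    rcases Nat.mod_two_eq_zero_or_one a with ha2 | ha2
    · -- a even : A = n - a
      have hA2 : A = n - a := by rw [hA, if_neg (by omega)]
      rw [hA2, hT, hT, hM]
      have hMcond : ((a % 2 = 1 ∧ b = a) ∨ (a % 2 = 0 ∧ b = n - a)) ↔ b = n - a := by
        omega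
      rw [if_congr hMcond rfl rfl, if_pos rfl, mul_one]
      by_cases hba : b = n - a
      · rw [if_pos hba.symm, if_pos hba, mul_one, mul_one]
        obtain ⟨m, hm⟩ := hn4
        obtain ⟨j, hj⟩ : ∃ j, a = 2 * j := ⟨a / 2, by omega⟩
        have hcast : ((n - a : ℕ) : ℂ) = (n : ℂ) - a := by
          rw [Nat.cast_sub (by omega : a ≤ n)]
        rw [show (π : ℂ) * Complex.I * ((n - a : ℕ) : ℂ) ^ 2 / (2 * n)
            = (π : ℂ) * Complex.I * (a : ℂ) ^ 2 / (2 * n)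
              + ((((m : ℤ) - (j : ℤ)) : ℤ) : ℂ) * (2 * π * Complex.I) from ?_,
          Complex.exp_add, Complex.exp_int_mul_two_pi_mul_I, mul_one]
        rw [hcast]
        have hnC : (n : ℂ) ≠ 0 := by
          simp only [Ne, Nat.cast_eq_zero]; omega
        field_simp
        rw [hm, hj]
        push_cast
        ring
      · rw [if_neg (fun h => hba h.symm), if_neg hba, mul_zero, mul_zero]
    · -- a odd : A = a
      have hA2 : A = a := by rw [hA, if_pos ha2]
      rw [hA2, hT, hT, hM]
      have hMcond : ((a % 2 = 1 ∧ b = a) ∨ (a % 2 = 0 ∧ b = n - a)) ↔ b = a := by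
        omega
      rw [if_congr hMcond rfl rfl, if_pos rfl, mul_one]
      by_cases hba : b = a
      · rw [if_pos hba.symm, if_pos hba]
      · rw [if_neg (fun h => hba h.symm), if_neg hba]
end

section
/- Let n ≥ 6 with n ≡ 2 (mod 4). Define M as the coefficient matrix of |χ₁+χ_{n-1}|² + |χ₃+χ_{n-3}|² + ... + 2|χ_{n/2}|², i.e. M_{ab} = 1 if a,b are odd, a ≠ n/2 ≠ b, and b ∈ {a, n-a}; M_{n/2,n/2} = 2; M_{ab} = 0 otherwise. Then M commutes with S and T, has nonnegative integer entries, and M_{11} = 1. -/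
open Real Finset Complex

theorem stmt_19 (n : ℕ) (hn : 6 ≤ n) (hn4 : n % 4 = 2) (S T M : ℕ → ℕ → ℂ)
    (hS : ∀ a b, S a b =
      ((Real.sqrt (2 / n) * Real.sin (π * a * b / n) : ℝ) : ℂ))
    (hT : ∀ a b, T a b =
      Complex.exp (Real.pi * Complex.I * a ^ 2 / (2 * n)) * (if a = b then 1 else 0))
    (hM : ∀ a b, M a b =
      if a = n / 2 ∧ b = n / 2 then 2
      else if a % 2 = 1 ∧ a ≠ n / 2 ∧ b % 2 = 1 ∧ b ≠ n / 2 ∧ (b = a ∨ b = n - a)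
      then 1 else 0) :
    (∀ a ∈ Finset.Icc 1 (n - 1), ∀ b ∈ Finset.Icc 1 (n - 1),
      ∑ c ∈ Finset.Icc 1 (n - 1), M a c * S c b =
      ∑ c ∈ Finset.Icc 1 (n - 1), S a c * M c b) ∧
    (∀ a ∈ Finset.Icc 1 (n - 1), ∀ b ∈ Finset.Icc 1 (n - 1),
      ∑ c ∈ Finset.Icc 1 (n - 1), M a c * T c b =
      ∑ c ∈ Finset.Icc 1 (n - 1), T a c * M c b) ∧
    (∀ a ∈ Finset.Icc 1 (n - 1), ∀ b ∈ Finset.Icc 1 (n - 1), ∃ m : ℕ, M a b = m) ∧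
    M 1 1 = 1 := by
  have h2 : n % 2 = 0 := by omega
  have hho : (n / 2) % 2 = 1 := by omega
  have hnR : (n : ℝ) ≠ 0 := Nat.cast_ne_zero.mpr (by omega)
  -- key sine flip lemma
  have key : ∀ a b : ℕ, b ≤ n → Real.sin (π * a * ((n - b : ℕ) : ℝ) / n)
      = (-1 : ℝ) ^ (a + 1) * Real.sin (π * a * b / n) := by
    intro a b hb
    rw [Nat.cast_sub hb]
    have he : π * a * ((n : ℝ) - b) / n = a * π - π * a * b / n := by
      field_simp
    rw [he, Real.sin_nat_mul_pi_sub, pow_succ]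
    ring
  set F : ℕ → ℕ → ℝ := fun a b => Real.sqrt (2 / n) * Real.sin (π * a * b / n) with hF
  have hSF : ∀ a b, S a b = ((F a b : ℝ) : ℂ) := fun a b => hS a b
  have Fsymm : ∀ a b, F a b = F b a := by
    intro a b; simp only [hF]; ring_nf
  have Fflip : ∀ a b : ℕ, b ≤ n → F a (n - b) = (-1 : ℝ) ^ (a + 1) * F a b := by
    intro a b hb; simp only [hF]; rw [key a b hb]; ring
  have Fflip' : ∀ a b : ℕ, a ≤ n → F (n - a) b = (-1 : ℝ) ^ (b + 1) * F a b := by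
    intro a b ha; rw [Fsymm, Fflip b a ha, Fsymm]
  have Fhalf0 : ∀ b : ℕ, b % 2 = 0 → F (n / 2) b = 0 := by
    intro b hb
    have hnat : (n / 2) * b = n * (b / 2) := by
      obtain ⟨p, rfl⟩ : 2 ∣ n := by omega
      obtain ⟨q, rfl⟩ : 2 ∣ b := by omega
      rw [Nat.mul_div_cancel_left p (by norm_num), Nat.mul_div_cancel_left q (by norm_num)]
      ring
    have hc : ((n / 2 : ℕ) : ℝ) * (b : ℝ) = (n : ℝ) * ((b / 2 : ℕ) : ℝ) := by
      exact_mod_cast congrArg (fun x : ℕ => (x : ℝ)) hnat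
    have he : (π : ℝ) * ((n / 2 : ℕ) : ℝ) * b / n = ((b / 2 : ℕ) : ℝ) * π := by
      rw [mul_assoc, hc]
      field_simp
    simp only [hF, he, Real.sin_nat_mul_pi, mul_zero]
  -- useful M entry values
  have hMhh : M (n / 2) (n / 2) = 2 := by rw [hM]; simp
  -- row sum evaluation
  have row : ∀ a ∈ Finset.Icc 1 (n - 1), ∀ g : ℕ → ℂ,
      ∑ c ∈ Finset.Icc 1 (n - 1), M a c * g c =
        if a = n / 2 then 2 * g (n / 2)
        else if a % 2 = 1 then g a + g (n - a) else 0 := by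
    intro a ha g
    simp only [Finset.mem_Icc] at ha
    by_cases hah : a = n / 2
    · subst hah
      rw [if_pos rfl]
      rw [Finset.sum_eq_single_of_mem (n / 2)
        (Finset.mem_Icc.mpr ⟨by omega, by omega⟩)
        (fun c _ hcne => by rw [hM, if_neg (by tauto), if_neg (by tauto)]; ring)]
      simp only [hMhh]
    · rw [if_neg hah]
      by_cases hao : a % 2 = 1
      · rw [if_pos hao]
        have hane : a ≠ n - a := by omega
        have hsub : ({a, n - a} : Finset ℕ) ⊆ Finset.Icc 1 (n - 1) := by
          intro c hc
          simp only [Finset.mem_insert, Finset.mem_singleton] at hc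
          rcases hc with rfl | rfl <;> simp only [Finset.mem_Icc] <;> omega
        have hz : ∀ c ∈ Finset.Icc 1 (n - 1), c ∉ ({a, n - a} : Finset ℕ) →
            M a c * g c = 0 := by
          intro c _ hcn
          simp only [Finset.mem_insert, Finset.mem_singleton, not_or] at hcn
          rw [hM, if_neg (by tauto), if_neg (by push_neg; intro _ _ _ _; omega)]
          ring
        rw [← Finset.sum_subset hsub hz, Finset.sum_pair hane]
        have h1 : M a a = 1 := by
          rw [hM, if_neg (by tauto), if_pos ⟨hao, hah, hao, hah, Or.inl rfl⟩]
        have h2' : M a (n - a) = 1 := by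
          rw [hM, if_neg (by tauto), if_pos ⟨hao, hah, by omega, by omega, Or.inr rfl⟩]
        rw [h1, h2', one_mul, one_mul]
      · rw [if_neg hao]
        exact Finset.sum_eq_zero fun c _ => by
          rw [hM, if_neg (by tauto), if_neg (by tauto)]; ring
  -- column sum evaluation
  have col : ∀ b ∈ Finset.Icc 1 (n - 1), ∀ g : ℕ → ℂ,
      ∑ c ∈ Finset.Icc 1 (n - 1), g c * M c b =
        if b = n / 2 then 2 * g (n / 2)
        else if b % 2 = 1 then g b + g (n - b) else 0 := by
    intro b hb g
    simp only [Finset.mem_Icc] at hb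
    by_cases hbh : b = n / 2
    · subst hbh
      rw [if_pos rfl]
      rw [Finset.sum_eq_single_of_mem (n / 2)
        (Finset.mem_Icc.mpr ⟨by omega, by omega⟩)
        (fun c _ hcne => by rw [hM, if_neg (by tauto), if_neg (by tauto)]; ring)]
      simp only [hMhh]; ring
    · rw [if_neg hbh]
      by_cases hbo : b % 2 = 1
      · rw [if_pos hbo]
        have hbne : b ≠ n - b := by omega
        have hsub : ({b, n - b} : Finset ℕ) ⊆ Finset.Icc 1 (n - 1) := by
          intro c hc
          simp only [Finset.mem_insert, Finset.mem_singleton] at hc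
          rcases hc with rfl | rfl <;> simp only [Finset.mem_Icc] <;> omega
        have hz : ∀ c ∈ Finset.Icc 1 (n - 1), c ∉ ({b, n - b} : Finset ℕ) →
            g c * M c b = 0 := by
          intro c hc hcn
          simp only [Finset.mem_insert, Finset.mem_singleton, not_or] at hcn
          simp only [Finset.mem_Icc] at hc
          rw [hM, if_neg (by tauto), if_neg (by push_neg; intro _ _ _ _; omega)]
          ring
        rw [← Finset.sum_subset hsub hz, Finset.sum_pair hbne]
        have h1 : M b b = 1 := by
          rw [hM, if_neg (by tauto), if_pos ⟨hbo, hbh, hbo, hbh, Or.inl rfl⟩]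
        have h2' : M (n - b) b = 1 := by
          rw [hM, if_neg (by tauto),
            if_pos ⟨by omega, by omega, hbo, hbh, Or.inr (by omega)⟩]
        rw [h1, h2', mul_one, mul_one]
      · rw [if_neg hbo]
        exact Finset.sum_eq_zero fun c _ => by
          rw [hM, if_neg (by tauto), if_neg (by tauto)]; ring
  refine ⟨?_, ?_, ?_, ?_⟩
  · -- MS = SM
    intro a ha b hb
    have ha' := Finset.mem_Icc.mp ha
    have hb' := Finset.mem_Icc.mp hb
    rw [row a ha (fun c => S c b), col b hb (fun c => S a c)]
    by_cases hah : a = n / 2 <;> by_cases hbh : b = n / 2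
    · subst hah; subst hbh; simp
    · rw [if_pos hah, if_neg hbh]
      subst hah
      by_cases hbo : b % 2 = 1
      · rw [if_pos hbo]
        simp only [hSF]
        have e : F (n / 2) (n - b) = F (n / 2) b := by
          rw [Fflip _ _ (by omega)]
          have he' : Even (n / 2 + 1) := by
            refine Nat.even_add_one.mpr ?_
            simp [Nat.odd_iff.mpr hho, Nat.not_even_iff_odd]
          rw [he'.neg_one_pow, one_mul]
        rw [e]; ring
      · rw [if_neg hbo]
        simp only [hSF]
        rw [Fhalf0 b (by omega)]
        push_cast; ring
    · rw [if_neg hah, if_pos hbh]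
      subst hbh
      by_cases hao : a % 2 = 1
      · rw [if_pos hao]
        simp only [hSF]
        have e : F (n - a) (n / 2) = F a (n / 2) := by
          rw [Fflip' _ _ (by omega)]
          have he' : Even (n / 2 + 1) := by
            refine Nat.even_add_one.mpr ?_
            simp [Nat.odd_iff.mpr hho, Nat.not_even_iff_odd]
          rw [he'.neg_one_pow, one_mul]
        rw [e]; ring
      · rw [if_neg hao]
        simp only [hSF]
        rw [Fsymm, Fhalf0 a (by omega)]
        push_cast; ring
    · rw [if_neg hah, if_neg hbh]
      by_cases hao : a % 2 = 1 <;> by_cases hbo : b % 2 = 1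
      · rw [if_pos hao, if_pos hbo]
        simp only [hSF]
        have e1 : F (n - a) b = F a b := by
          rw [Fflip' _ _ (by omega)]
          have : Even (b + 1) := by
            refine Nat.even_add_one.mpr ?_
            simp [Nat.odd_iff.mpr hbo, Nat.not_even_iff_odd]
          rw [this.neg_one_pow, one_mul]
        have e2 : F a (n - b) = F a b := by
          rw [Fflip _ _ (by omega)]
          have : Even (a + 1) := by
            refine Nat.even_add_one.mpr ?_
            simp [Nat.odd_iff.mpr hao, Nat.not_even_iff_odd]
          rw [this.neg_one_pow, one_mul]
        rw [e1, e2]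
      · rw [if_pos hao, if_neg hbo]
        simp only [hSF]
        have e1 : F (n - a) b = -F a b := by
          rw [Fflip' _ _ (by omega)]
          have : Odd (b + 1) := Nat.odd_iff.mpr (by omega)
          rw [this.neg_one_pow]; ring
        rw [e1]; push_cast; ring
      · rw [if_neg hao, if_pos hbo]
        simp only [hSF]
        have e2 : F a (n - b) = -F a b := by
          rw [Fflip _ _ (by omega)]
          have : Odd (a + 1) := Nat.odd_iff.mpr (by omega)
          rw [this.neg_one_pow]; ring
        rw [e2]; push_cast; ring
      · rw [if_neg hao, if_neg hbo]
  · -- MT = TM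
    intro a ha b hb
    have ha' := Finset.mem_Icc.mp ha
    have hb' := Finset.mem_Icc.mp hb
    have hL : ∑ c ∈ Finset.Icc 1 (n - 1), M a c * T c b = M a b * T b b :=
      Finset.sum_eq_single_of_mem b hb
        (fun c _ hcne => by rw [hT, if_neg hcne]; ring)
    have hR : ∑ c ∈ Finset.Icc 1 (n - 1), T a c * M c b = T a a * M a b :=
      Finset.sum_eq_single_of_mem a ha
        (fun c _ hcne => by rw [hT, if_neg (fun h => hcne h.symm)]; ring)
    rw [hL, hR]
    by_cases hMz : M a b = 0
    · rw [hMz]; ring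
    · have hTT : T a a = T b b := by
        rw [hM] at hMz
        split_ifs at hMz with h1 hcase
        · rw [h1.1, h1.2]
        · rcases hcase.2.2.2.2 with rfl | rfl
          · rfl
          · rw [hT, hT, if_pos rfl, if_pos rfl]
            congr 1
            obtain ⟨k, hk⟩ : ∃ k : ℤ, (n : ℤ) - 2 * a = 4 * k :=
              ⟨((n : ℤ) - 2 * a) / 4, by omega⟩
            have hca : ((n - a : ℕ) : ℂ) = (n : ℂ) - a := by
              push_cast [Nat.cast_sub (by omega : a ≤ n)]; ring
            have hkc : (4 : ℂ) * k = (n : ℂ) - 2 * a := by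
              exact_mod_cast congrArg (fun x : ℤ => (x : ℂ)) hk.symm
            have hnc : (n : ℂ) ≠ 0 := Nat.cast_ne_zero.mpr (by omega)
            have hstep : ((π : ℝ) : ℂ) * Complex.I * ((a : ℕ) : ℂ) ^ 2 / (2 * n)
                = ((π : ℝ) : ℂ) * Complex.I * ((n - a : ℕ) : ℂ) ^ 2 / (2 * n)
                  + ((-k : ℤ) : ℂ) * (2 * ((π : ℝ) : ℂ) * Complex.I) := by
              rw [hca]
              have h2n : (2 : ℂ) * n ≠ 0 := mul_ne_zero two_ne_zero hnc
              rw [div_add' _ _ _ h2n, div_left_inj' h2n]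
              push_cast
              linear_combination (((π : ℝ) : ℂ) * Complex.I * (n : ℂ)) * hkc
            rw [hstep, Complex.exp_add, Complex.exp_int_mul_two_pi_mul_I (-k), mul_one]
        · exact absurd rfl hMz
      rw [hTT]; ring
  · -- nat entries
    intro a _ b _
    rw [hM]
    split_ifs
    · exact ⟨2, by norm_num⟩
    · exact ⟨1, by norm_num⟩
    · exact ⟨0, by norm_num⟩
  · -- M 1 1 = 1
    rw [hM]
    have h1 : (1 : ℕ) ≠ n / 2 := by omega
    rw [if_neg (by tauto), if_pos ⟨rfl, h1, rfl, h1, Or.inl rfl⟩]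
end
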